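/- arXiv:1310.0670 — 3 statements merged into one kernel-verified Lean document; each statement's English description precedes it below -/
import Mathlib

section
/- A cellular automaton Φ : α^ℤ → α^ℤ with quiescent state B is uniquely ergodic if and only if d_Φ(B, x) = 1 holds for all x in the limit set Ω_Φ; and in that case, the convergence of (1/n)·|{t ∈ [0, n−1] : Φ^t(x)_0 = B}| to 1 is uniform in x ∈ Ω_Φ. -/
/-!
If every point of the limit set visits `B` with density one, let `μ` be any invariant
probability measure. It is carried by the limit set, which is shift-invariant, so along
`μ`-almost every orbit each coordinate is `B` with density one; invariance and dominated
convergence turn this into `μ {z | z i = B} = 1` for every `i`, whence `μ = δ_{B^∞}`.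
Conversely, if `δ_{B^∞}` is the only invariant measure, Oxtoby's argument applies: along any
sequence of orbit segments on which the frequency of `B` at the origin stays `ε` away from `1`,
a weak limit point of the empirical measures (which exists since probability measures on a
compact space form a compact space) is invariant but gives `{z | z 0 = B}` mass `≤ 1 - ε`.
This yields convergence to `1`, uniformly in the starting point.
-/

open MeasureTheory Filter Set Topology

lemma tendsto_of_liminf_eq_of_le {u : ℕ → ℝ} {a b : ℝ} (hb : ∀ n, b ≤ u n) (ha : ∀ n, u n ≤ a)
    (h : liminf u atTop = a) : Tendsto u atTop (𝓝 a) :=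
  tendsto_of_le_liminf_of_limsup_le h.ge
    (limsup_le_of_le (isBoundedUnder_of ⟨b, hb⟩).isCoboundedUnder_le (.of_forall ha))
    (isBoundedUnder_of ⟨a, ha⟩) (isBoundedUnder_of ⟨b, hb⟩)

section Dynamics

variable {X : Type*} {Φ : X → X}

lemma abs_birkhoffAverage_le {g : X → ℝ} {C : ℝ} (hC : ∀ x, |g x| ≤ C) (n : ℕ) (x : X) :
    |birkhoffAverage ℝ Φ g n x| ≤ C := by
  rcases Nat.eq_zero_or_pos n with rfl | hn
  · simpa using (abs_nonneg _).trans (hC x)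
  rw [birkhoffAverage, birkhoffSum, smul_eq_mul, abs_mul, abs_inv, Nat.abs_cast,
    inv_mul_le_iff₀ (by positivity)]
  calc |∑ k ∈ Finset.range n, g (Φ^[k] x)|
      ≤ ∑ k ∈ Finset.range n, |g (Φ^[k] x)| := Finset.abs_sum_le_sum_abs _ _
    _ ≤ ∑ _k ∈ Finset.range n, C := Finset.sum_le_sum fun k _ => hC _
    _ = n * C := by simp

lemma birkhoffAverage_comp_self (g : X → ℝ) (n : ℕ) (x : X) :
    birkhoffAverage ℝ Φ (g ∘ Φ) n x = birkhoffAverage ℝ Φ g n (Φ x) := by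
  simp only [birkhoffAverage, birkhoffSum, Function.comp_apply, ← Function.iterate_succ_apply',
    Function.iterate_succ_apply]

def limitSet (Φ : X → X) : Set X := ⋂ n : ℕ, Φ^[n] '' univ

variable [MeasurableSpace X]

lemma measurePreserving_iff_measure_preimage_eq (hΦ : Measurable Φ) {μ : Measure X} :
    MeasurePreserving Φ μ μ ↔ ∀ A, MeasurableSet A → μ (Φ ⁻¹' A) = μ A := by
  refine ⟨fun h A hA => h.measure_preimage hA.nullMeasurableSet, fun h => ⟨hΦ, ?_⟩⟩
  ext A hA
  rw [Measure.map_apply hΦ hA, h A hA]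

lemma measurePreserving_dirac (hΦ : Measurable Φ) {a : X} (ha : Φ a = a) :
    MeasurePreserving Φ (Measure.dirac a) (Measure.dirac a) :=
  ⟨hΦ, by rw [Measure.map_dirac' hΦ, ha]⟩

lemma eq_dirac_of_ae_eq {μ : Measure X} [IsProbabilityMeasure μ] {a : X}
    (h : ∀ᵐ x ∂μ, x = a) : μ = Measure.dirac a :=
  calc μ = μ.map id := Measure.map_id.symm
    _ = μ.map (fun _ => a) := Measure.map_congr h
    _ = Measure.dirac a := by rw [Measure.map_const, measure_univ, one_smul]

lemma integral_birkhoffAverage {μ : Measure X} (hΦ : MeasurePreserving Φ μ μ) {g : X → ℝ}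
    (hg : Integrable g μ) {n : ℕ} (hn : n ≠ 0) :
    ∫ x, birkhoffAverage ℝ Φ g n x ∂μ = ∫ x, g x ∂μ := by
  have hcomp (t : ℕ) : ∫ x, g (Φ^[t] x) ∂μ = ∫ x, g x ∂μ := by
    conv_rhs => rw [← (hΦ.iterate t).map_eq]
    exact (integral_map (hΦ.iterate t).aemeasurable
      (by rw [(hΦ.iterate t).map_eq]; exact hg.aestronglyMeasurable)).symm
  simp only [birkhoffAverage, birkhoffSum, smul_eq_mul]
  rw [integral_const_mul, integral_finsetSum _ (f := fun t x => g (Φ^[t] x))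
    fun t _ => (hΦ.iterate t).integrable_comp_of_integrable hg]
  simp [hcomp, hn]

theorem integral_eq_of_ae_tendsto_birkhoffAverage {μ : Measure X} [IsProbabilityMeasure μ]
    (hΦ : MeasurePreserving Φ μ μ) {g : X → ℝ} (hg : AEStronglyMeasurable g μ) {C : ℝ}
    (hC : ∀ x, |g x| ≤ C) {c : ℝ}
    (hlim : ∀ᵐ x ∂μ, Tendsto (fun n => birkhoffAverage ℝ Φ g n x) atTop (𝓝 c)) :
    ∫ x, g x ∂μ = c := by
  have hmeas (n : ℕ) : AEStronglyMeasurable (fun x => birkhoffAverage ℝ Φ g n x) μ := by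
    simp only [birkhoffAverage, birkhoffSum, smul_eq_mul]
    exact (Finset.aestronglyMeasurable_fun_sum _ fun t _ =>
      hg.comp_measurePreserving (hΦ.iterate t)).const_mul _
  have hdom := tendsto_integral_of_dominated_convergence (fun _ => C) hmeas
    (integrable_const C) (fun n => .of_forall fun x => abs_birkhoffAverage_le hC n x) hlim
  rw [integral_const, probReal_univ, one_smul] at hdom
  refine tendsto_nhds_unique (tendsto_const_nhds.congr' ?_) hdom
  filter_upwards [eventually_ne_atTop 0] with n hn
  exact (integral_birkhoffAverage hΦ (.of_bound hg C (.of_forall hC)) hn).symm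

noncomputable def empiricalMeasure (Φ : X → X) (n : ℕ) (x : X) : Measure X :=
  (n : ENNReal)⁻¹ • ∑ t ∈ Finset.range n, Measure.dirac (Φ^[t] x)

lemma isProbabilityMeasure_empiricalMeasure {n : ℕ} (hn : n ≠ 0) (x : X) :
    IsProbabilityMeasure (empiricalMeasure Φ n x) := by
  constructor
  simp [empiricalMeasure, ENNReal.inv_mul_cancel (Nat.cast_ne_zero.2 hn) (ENNReal.natCast_ne_top n)]

variable [TopologicalSpace X] [OpensMeasurableSpace X]

lemma integral_empiricalMeasure (f : BoundedContinuousFunction X ℝ) (n : ℕ) (x : X) :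
    ∫ y, f y ∂(empiricalMeasure Φ n x) = birkhoffAverage ℝ Φ f n x := by
  rw [empiricalMeasure, integral_smul_measure,
    integral_finsetSum_measure fun t _ => f.integrable _]
  simp [birkhoffAverage, birkhoffSum, integral_dirac' _ _ f.continuous.stronglyMeasurable]

lemma ae_mem_limitSet [CompactSpace X] [T2Space X] (hΦ : Continuous Φ) {μ : Measure X}
    (hμ : MeasurePreserving Φ μ μ) : ∀ᵐ x ∂μ, x ∈ limitSet Φ := by
  simp only [limitSet, mem_iInter, ae_all_iff, image_univ]
  intro n
  have hclosed : IsClosed (range Φ^[n]) := (isCompact_range (hΦ.iterate n)).isClosed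
  simpa [(hμ.iterate n).map_eq] using ae_map_mem_range (Φ^[n]) hclosed.measurableSet μ

variable [HasOuterApproxClosed X] [BorelSpace X]

/-- Krylov–Bogolyubov: `hlim` says that `μ` is a weak limit of the empirical measures of orbit
segments of diverging length. -/
theorem measurePreserving_of_tendsto_birkhoffAverage (hΦ : Continuous Φ) {ι : Type*}
    {L : Filter ι} [L.NeBot] {n : ι → ℕ} (hn : Tendsto n L atTop) (x : ι → X) {μ : Measure X}
    [IsFiniteMeasure μ]
    (hlim : ∀ f : BoundedContinuousFunction X ℝ,
      Tendsto (fun i => birkhoffAverage ℝ Φ f (n i) (x i)) L (𝓝 (∫ y, f y ∂μ))) :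
    MeasurePreserving Φ μ μ := by
  refine ⟨hΦ.measurable, ext_of_forall_integral_eq_of_IsFiniteMeasure fun f => ?_⟩
  rw [integral_map hΦ.aemeasurable f.continuous.aestronglyMeasurable]
  have hshift : Tendsto (fun i => birkhoffAverage ℝ Φ f (n i) (Φ (x i))
      - birkhoffAverage ℝ Φ f (n i) (x i)) L (𝓝 0) := by
    refine squeeze_zero_norm (fun i => ?_) ((tendsto_const_nhds (x := 2 * ‖f‖)).div_atTop
      (tendsto_natCast_atTop_atTop.comp hn))
    rw [← dist_eq_norm, dist_birkhoffAverage_apply_birkhoffAverage]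
    exact div_le_div_of_nonneg_right (f.dist_le_two_norm _ _) (Nat.cast_nonneg _)
  refine tendsto_nhds_unique (hlim (f.compContinuous ⟨Φ, hΦ⟩)) ?_
  simpa [← birkhoffAverage_comp_self] using hshift.add (hlim f)

/-- Oxtoby's theorem for uniquely ergodic systems. -/
theorem tendstoUniformly_birkhoffAverage_of_forall_invariant_eq [CompactSpace X] [T2Space X]
    (hΦ : Continuous Φ) {μ : Measure X}
    (huniq : ∀ ν : Measure X, IsProbabilityMeasure ν → MeasurePreserving Φ ν ν → ν = μ)
    (f : BoundedContinuousFunction X ℝ) :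
    TendstoUniformly (fun n x => birkhoffAverage ℝ Φ f n x) (fun _ => ∫ y, f y ∂μ) atTop := by
  rw [Metric.tendstoUniformly_iff]
  by_contra! hbad
  obtain ⟨ε, hε, hfreq⟩ := hbad
  obtain ⟨n, hn_mono, hn⟩ :=
    extraction_of_frequently_atTop (hfreq.and_eventually (eventually_ne_atTop 0))
  choose x hx using fun k => (hn k).1
  let ν (k : ℕ) : ProbabilityMeasure X :=
    ⟨empiricalMeasure Φ (n k) (x k), isProbabilityMeasure_empiricalMeasure (hn k).2 (x k)⟩
  let 𝒰 := Ultrafilter.of (atTop : Filter ℕ)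
  obtain ⟨ν₀, -, hν₀⟩ := isCompact_univ.ultrafilter_le_nhds (𝒰.map ν) (by simp)
  have hlim (g : BoundedContinuousFunction X ℝ) : Tendsto
      (fun k => birkhoffAverage ℝ Φ g (n k) (x k)) 𝒰 (𝓝 (∫ y, g y ∂(ν₀ : Measure X))) := by
    simpa [ν, integral_empiricalMeasure] using
      ProbabilityMeasure.tendsto_iff_forall_integral_tendsto.1 hν₀ g
  have hν₀μ : (ν₀ : Measure X) = μ := huniq _ inferInstance <|
    measurePreserving_of_tendsto_birkhoffAverage hΦ
      (hn_mono.tendsto_atTop.mono_left (Ultrafilter.of_le _)) x hlim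
  obtain ⟨k, hk⟩ := ((hlim f).eventually (Metric.ball_mem_nhds _ hε)).exists
  rw [hν₀μ, dist_comm] at hk
  exact (hx k).not_gt hk

end Dynamics

section CellularAutomaton

variable {α : Type*} {Φ : (ℤ → α) → ℤ → α}

lemma commute_translate (hcomm : ∀ x : ℤ → α, Φ (fun i => x (i + 1)) = fun i => Φ x (i + 1))
    (k : ℤ) : Function.Commute Φ (fun x i => x (i + k)) := by
  induction k using Int.induction_on with
  | zero => intro x; simp
  | succ k ih =>
    intro x
    have h := hcomm (fun i => x (i + k))
    simp only [ih x] at h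
    simpa only [add_comm (1 : ℤ), add_assoc] using h
  | pred k ih =>
    intro x
    funext j
    have e : (fun i => x (i + 1 + (-k - 1))) = fun i => x (i + -k) := by funext i; ring_nf
    have h := congrFun (hcomm (fun i => x (i + (-k - 1)))) (j - 1)
    simp only [e, ih x, sub_add_cancel] at h
    rw [← h]
    ring_nf

lemma translate_mem_limitSet
    (hcomm : ∀ x : ℤ → α, Φ (fun i => x (i + 1)) = fun i => Φ x (i + 1))
    {x : ℤ → α} (hx : x ∈ limitSet Φ) (k : ℤ) : (fun i => x (i + k)) ∈ limitSet Φ := by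
  simp only [limitSet, mem_iInter, image_univ] at hx ⊢
  intro n
  obtain ⟨y, rfl⟩ := hx n
  exact ⟨fun i => y (i + k), (commute_translate hcomm k).iterate_left n y⟩

variable [TopologicalSpace α] [DiscreteTopology α] [Finite α] [DecidableEq α]

noncomputable def coordIndicator (B : α) (i : ℤ) : BoundedContinuousFunction (ℤ → α) ℝ :=
  .mkOfCompact ⟨fun z => if z i = B then 1 else 0,
    (continuous_of_discreteTopology (f := fun a : α => if a = B then (1 : ℝ) else 0)).comp
      (continuous_apply i)⟩

lemma coordIndicator_eq_indicator (B : α) (i : ℤ) :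
    ⇑(coordIndicator B i) = {z | z i = B}.indicator 1 := by
  ext z
  simp [coordIndicator, Set.indicator_apply]

lemma abs_coordIndicator_le (B : α) (i : ℤ) (z : ℤ → α) : |coordIndicator B i z| ≤ 1 := by
  rw [coordIndicator_eq_indicator]
  by_cases h : z i = B <;> simp [h]

lemma birkhoffAverage_coordIndicator (B : α) (i : ℤ) (n : ℕ) (x : ℤ → α) :
    birkhoffAverage ℝ Φ (coordIndicator B i) n x =
      (((Finset.range n).filter fun t => Φ^[t] x i = B).card : ℝ) / n := by
  simp [birkhoffAverage, birkhoffSum, coordIndicator, Finset.sum_boole, div_eq_inv_mul]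

lemma tendsto_birkhoffAverage_coordIndicator
    (hcomm : ∀ x : ℤ → α, Φ (fun i => x (i + 1)) = fun i => Φ x (i + 1)) {B : α}
    (hdens : ∀ x ∈ limitSet Φ,
      liminf (fun n => birkhoffAverage ℝ Φ (coordIndicator B 0) n x) atTop = 1)
    {x : ℤ → α} (hx : x ∈ limitSet Φ) (i : ℤ) :
    Tendsto (fun n => birkhoffAverage ℝ Φ (coordIndicator B i) n x) atTop (𝓝 1) := by
  have hshift (n : ℕ) : birkhoffAverage ℝ Φ (coordIndicator B i) n x =
      birkhoffAverage ℝ Φ (coordIndicator B 0) n (fun j => x (j + i)) := by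
    simp [birkhoffAverage_coordIndicator, (commute_translate hcomm i).iterate_left _ _]
  have hbound (n : ℕ) :=
    abs_le.1 (abs_birkhoffAverage_le (Φ := Φ) (abs_coordIndicator_le B i) n x)
  refine tendsto_of_liminf_eq_of_le (fun n => (hbound n).1) (fun n => (hbound n).2) ?_
  simpa only [hshift] using hdens _ (translate_mem_limitSet hcomm hx i)

variable [MeasurableSpace α] [BorelSpace α]

theorem eq_dirac_of_forall_liminf_eq_one (hcont : Continuous Φ)
    (hcomm : ∀ x : ℤ → α, Φ (fun i => x (i + 1)) = fun i => Φ x (i + 1)) {B : α}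
    (hdens : ∀ x ∈ limitSet Φ,
      liminf (fun n => birkhoffAverage ℝ Φ (coordIndicator B 0) n x) atTop = 1)
    {μ : Measure (ℤ → α)} [IsProbabilityMeasure μ] (hμ : MeasurePreserving Φ μ μ) :
    μ = Measure.dirac (fun _ => B) := by
  have hcoord (i : ℤ) : ∀ᵐ z ∂μ, z i = B := by
    have hS : MeasurableSet {z : ℤ → α | z i = B} :=
      (measurableSet_singleton B).preimage (measurable_pi_apply i)
    have hint := integral_eq_of_ae_tendsto_birkhoffAverage hμ
      (coordIndicator B i).continuous.aestronglyMeasurable (abs_coordIndicator_le B i)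
      ((ae_mem_limitSet hcont hμ).mono fun x hx =>
        tendsto_birkhoffAverage_coordIndicator hcomm hdens hx i)
    rw [coordIndicator_eq_indicator, integral_indicator_one hS, measureReal_def,
      ENNReal.toReal_eq_one_iff] at hint
    exact (mem_ae_iff_prob_eq_one hS).2 hint
  exact eq_dirac_of_ae_eq (by filter_upwards [ae_all_iff.2 hcoord] with z hz using funext hz)

end CellularAutomaton

/-- A cellular automaton `Φ : α^ℤ → α^ℤ` with quiescent state `B` is
uniquely ergodic iff `d_Φ(B, x) = 1` for every `x` in the limit set
`Ω_Φ = ⋂ₙ Φⁿ(α^ℤ)`; and in that case the convergence is uniform in `x ∈ Ω_Φ`. -/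
theorem uniquelyErgodic_iff_blank_density_one_on_limitSet
    {α : Type} [Fintype α] [DecidableEq α] [TopologicalSpace α] [DiscreteTopology α]
    [MeasurableSpace α] [BorelSpace α]
    (B : α) (Φ : (ℤ → α) → (ℤ → α))
    (hcont : Continuous Φ)
    (hcomm : ∀ x : ℤ → α, Φ (fun i => x (i + 1)) = fun i => Φ x (i + 1))
    (hq : Φ (fun _ => B) = fun _ => B) :
    ((∃! μ : Measure (ℤ → α), IsProbabilityMeasure μ ∧
          ∀ A : Set (ℤ → α), MeasurableSet A → μ (Φ ⁻¹' A) = μ A) ↔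
      ∀ x ∈ ⋂ n : ℕ, Φ^[n] '' Set.univ,
        Filter.liminf (fun n : ℕ =>
            (((Finset.range n).filter fun t => Φ^[t] x 0 = B).card : ℝ) / n)
          Filter.atTop = 1) ∧
    ((∃! μ : Measure (ℤ → α), IsProbabilityMeasure μ ∧
          ∀ A : Set (ℤ → α), MeasurableSet A → μ (Φ ⁻¹' A) = μ A) →
      ∀ ε : ℝ, 0 < ε → ∃ N : ℕ, ∀ n : ℕ, N ≤ n → ∀ x ∈ ⋂ n : ℕ, Φ^[n] '' Set.univ,
        |(((Finset.range n).filter fun t => Φ^[t] x 0 = B).card : ℝ) / n - 1| < ε) := by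
  have hinv (μ : Measure (ℤ → α)) :
      (∀ A, MeasurableSet A → μ (Φ ⁻¹' A) = μ A) ↔ MeasurePreserving Φ μ μ :=
    (measurePreserving_iff_measure_preimage_eq hcont.measurable).symm
  have hδ := measurePreserving_dirac hcont.measurable hq
  have huniform (hue : ∃! μ : Measure (ℤ → α), IsProbabilityMeasure μ ∧
      ∀ A, MeasurableSet A → μ (Φ ⁻¹' A) = μ A) :
      TendstoUniformly (fun n x => birkhoffAverage ℝ Φ (coordIndicator B 0) n x)
        (fun _ => 1) atTop := by
    obtain ⟨μ, -, huniq⟩ := hue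
    have hδμ := huniq _ ⟨inferInstance, (hinv _).2 hδ⟩
    simpa [integral_dirac, coordIndicator] using
      tendstoUniformly_birkhoffAverage_of_forall_invariant_eq hcont
        (fun ν hν hνΦ => (huniq ν ⟨hν, (hinv ν).2 hνΦ⟩).trans hδμ.symm) (coordIndicator B 0)
  simp only [← birkhoffAverage_coordIndicator]
  refine ⟨⟨fun hue x _ => ((huniform hue).tendsto_at x).liminf_eq, fun hdens => ?_⟩,
    fun hue ε hε => ?_⟩
  · exact ⟨_, ⟨inferInstance, (hinv _).2 hδ⟩, fun μ ⟨_, hμ⟩ =>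
      eq_dirac_of_forall_liminf_eq_one hcont hcomm hdens ((hinv μ).1 hμ)⟩
  · obtain ⟨N, hN⟩ := eventually_atTop.1 (Metric.tendstoUniformly_iff.1 (huniform hue) ε hε)
    exact ⟨N, fun n hn x _ => by simpa [Real.dist_eq, abs_sub_comm] using hN n hn x⟩
end

section
/- Let Φ, Φ′, Φ″ be radius-1 cellular automata on finite alphabets with quiescent blank states, let S be a simulation of Φ′ by Φ and S′ a simulation of Φ″ by Φ′. If S is weakly rigid and connecting, and S′ is strongly rigid and strongly connecting, then the composition S′∘S is rigid and connecting. -/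
namespace CASim

variable {α α' : Type*}

/-- One-directional trajectories of the radius-1 CA with local rule `φ`:
`η t i` is the state of cell `i` at time `t`. -/
def TrajPlus (φ : α → α → α → α) : Set (ℕ → ℤ → α) :=
  {η | ∀ (t : ℕ) (i : ℤ), η (t + 1) i = φ (η t (i - 1)) (η t i) (η t (i + 1))}

/-- Two-directional nondeterministic trajectories of `Φ̃`: at each step each cell either
obeys the local rule or becomes blank. -/
def TrajTilde (B : α) (φ : α → α → α → α) : Set (ℤ → ℤ → α) :=
  {η | ∀ t i : ℤ, η (t + 1) i = φ (η t (i - 1)) (η t i) (η t (i + 1)) ∨ η (t + 1) i = B}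

/-- Two-directional nondeterministic trajectories of `Φ̂`: each cell applies the local
rule to a neighbourhood in which any subset of the three cells may be regarded as blank. -/
def TrajHat (B : α) (φ : α → α → α → α) : Set (ℤ → ℤ → α) :=
  {η | ∀ t i : ℤ, ∃ u v w : α,
    (u = η t (i - 1) ∨ u = B) ∧ (v = η t i ∨ v = B) ∧ (w = η t (i + 1) ∨ w = B) ∧
    η (t + 1) i = φ u v w}

/-- Blockwise application of a state function `π` to a one-directional spacetime
configuration, with blocks of width `Q` and height `U`. -/
def blockApply (Q U : ℕ) (π : (Fin Q → Fin U → α) → α') (η : ℕ → ℤ → α) :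
    ℕ → ℤ → α' :=
  fun t i => π fun q u => η (t * U + u.val) (i * Q + (q.val : ℤ))

/-- Blockwise application of a state function `π` to a two-directional spacetime
configuration. -/
def blockApplyZ (Q U : ℕ) (π : (Fin Q → Fin U → α) → α') (η : ℤ → ℤ → α) :
    ℤ → ℤ → α' :=
  fun t i => π fun q u => η (t * (U : ℤ) + (u.val : ℤ)) (i * (Q : ℤ) + (q.val : ℤ))

/-- `(Q, U, (a,b), C, π)` is a simulation of the radius-1 CA `φ'` (blank `B'`) by the
radius-1 CA `φ` (blank `B`). -/
def IsSimulation (B : α) (B' : α') (φ : α → α → α → α) (φ' : α' → α' → α' → α')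
    (Q U : ℕ) (a : Fin Q) (b : Fin U)
    (C : Set (Fin Q → Fin U → α)) (π : (Fin Q → Fin U → α) → α') : Prop :=
  (∀ P, P ∉ C → π P = B') ∧
  (∀ P ∈ C, P a b ≠ B) ∧
  (∀ η' ∈ TrajPlus φ', ∃ η ∈ TrajPlus φ, blockApply Q U π η = η')

/-- The coordinate `a + Q·a'` inside a block of size `Q·Q'`. -/
def combFin {Q Q' : ℕ} (a : Fin Q) (a' : Fin Q') : Fin (Q * Q') :=
  ⟨a.val + Q * a'.val, by
    have h1 := a.isLt
    have h2 := a'.isLt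
    calc a.val + Q * a'.val < Q + Q * a'.val := by omega
      _ = Q * (a'.val + 1) := by ring
      _ ≤ Q * Q' := Nat.mul_le_mul (le_refl Q) h2⟩

/-- The `Q × U` sub-block of a `QQ' × UU'` pattern at block coordinates `(q', u')`. -/
def subBlock (Q U Q' U' : ℕ) (P : Fin (Q * Q') → Fin (U * U') → α)
    (q' : Fin Q') (u' : Fin U') : Fin Q → Fin U → α :=
  fun q u => P (combFin q q') (combFin u u')

/-- Blockwise application of `π` to a `QQ' × UU'` pattern, yielding a `Q' × U'` pattern. -/
def blockPattern (Q U Q' U' : ℕ) (π : (Fin Q → Fin U → α) → α')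
    (P : Fin (Q * Q') → Fin (U * U') → α) : Fin Q' → Fin U' → α' :=
  fun q' u' => π (subBlock Q U Q' U' P q' u')



/-- Select the cell at offset `δ ∈ {-1,0,1}` from a neighbourhood `(u, v, w)`. -/
def sel (δ : ℤ) (u v w : α) : α :=
  if δ = -1 then u else if δ = 0 then v else w

/-- A state `c` is `δ`-demanding if whenever the local rule produces `c`, the
neighbourhood cell at offset `δ` is not blank. -/
def Demanding (B : α) (φ : α → α → α → α) (δ : ℤ) (c : α) : Prop :=
  ∀ u v w : α, φ u v w = c → sel δ u v w ≠ B

/-- The edge relation of the graph `G` attached to a spacetime configuration `η`: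
there is an edge from the cell `p = (i+δ, t-1)` to the cell `c = (i, t)` (cells are
`(space, time)` pairs) if both are non-blank and `η t i` is `δ`-demanding.
`Adj B φ η p c` says that `p` and `c` are adjacent via such an edge. -/
def Adj (B : α) (φ : α → α → α → α) (η : ℤ → ℤ → α) : ℤ × ℤ → ℤ × ℤ → Prop :=
  fun p c => ∃ δ : ℤ, (δ = -1 ∨ δ = 0 ∨ δ = 1) ∧
    p.1 = c.1 + δ ∧ p.2 = c.2 - 1 ∧
    η p.2 p.1 ≠ B ∧ η c.2 c.1 ≠ B ∧ Demanding B φ δ (η c.2 c.1)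

/-- Two cells are directly connected if there is a directed path between them. -/
def DirectlyConnected (B : α) (φ : α → α → α → α) (η : ℤ → ℤ → α)
    (p q : ℤ × ℤ) : Prop :=
  Relation.ReflTransGen (Adj B φ η) p q ∨ Relation.ReflTransGen (Adj B φ η) q p

/-- A simulation with state function `π` is rigid if `π(T̃ra_Φ) ⊆ T̃ra_Φ'`. -/
def Rigid (B : α) (B' : α') (φ : α → α → α → α) (φ' : α' → α' → α' → α')
    (Q U : ℕ) (π : (Fin Q → Fin U → α) → α') : Prop :=
  ∀ η ∈ TrajTilde B φ, blockApplyZ Q U π η ∈ TrajTilde B' φ'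

/-- Weak rigidity: `π(T̃ra_Φ) ⊆ T̂ra_Φ'`. -/
def WeaklyRigid (B : α) (B' : α') (φ : α → α → α → α) (φ' : α' → α' → α' → α')
    (Q U : ℕ) (π : (Fin Q → Fin U → α) → α') : Prop :=
  ∀ η ∈ TrajTilde B φ, blockApplyZ Q U π η ∈ TrajHat B' φ'

/-- Strong rigidity: `π(T̂ra_Φ) ⊆ T̃ra_Φ'`. -/
def StronglyRigid (B : α) (B' : α') (φ : α → α → α → α) (φ' : α' → α' → α' → α')
    (Q U : ℕ) (π : (Fin Q → Fin U → α) → α') : Prop :=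
  ∀ η ∈ TrajHat B φ, blockApplyZ Q U π η ∈ TrajTilde B' φ'

/-- A simulation `(Q,U,(a,b),C,π)` is connecting if for every `η ∈ T̃ra_Φ`, whenever
the cells `π(η)^t_i` and `π(η)^{t-1}_{i+δ}` are adjacent (in the graph of `π(η)`
formed with the local rule `φ'`), the base cells `η^{tU+b}_{iQ+a}` and
`η^{(t-1)U+b}_{(i+δ)Q+a}` are directly connected in `η`. -/
def Connecting (B : α) (B' : α') (φ : α → α → α → α) (φ' : α' → α' → α' → α')
    (Q U : ℕ) (a : Fin Q) (b : Fin U) (π : (Fin Q → Fin U → α) → α') : Prop :=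
  ∀ η ∈ TrajTilde B φ, ∀ i t δ : ℤ, (δ = -1 ∨ δ = 0 ∨ δ = 1) →
    Adj B' φ' (blockApplyZ Q U π η) (i + δ, t - 1) (i, t) →
    DirectlyConnected B φ η
      ((i + δ) * (Q : ℤ) + (a.val : ℤ), (t - 1) * (U : ℤ) + (b.val : ℤ))
      (i * (Q : ℤ) + (a.val : ℤ), t * (U : ℤ) + (b.val : ℤ))

/-- Strongly connecting: the connecting condition holds for every `η ∈ T̂ra_Φ`. -/
def StronglyConnecting (B : α) (B' : α') (φ : α → α → α → α) (φ' : α' → α' → α' → α')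
    (Q U : ℕ) (a : Fin Q) (b : Fin U) (π : (Fin Q → Fin U → α) → α') : Prop :=
  ∀ η ∈ TrajHat B φ, ∀ i t δ : ℤ, (δ = -1 ∨ δ = 0 ∨ δ = 1) →
    Adj B' φ' (blockApplyZ Q U π η) (i + δ, t - 1) (i, t) →
    DirectlyConnected B φ η
      ((i + δ) * (Q : ℤ) + (a.val : ℤ), (t - 1) * (U : ℤ) + (b.val : ℤ))
      (i * (Q : ℤ) + (a.val : ℤ), t * (U : ℤ) + (b.val : ℤ))

end CASim


section Aux
open CASim

private lemma blockApplyZ_comp {α α' α'' : Type*} (Q U Q' U' : ℕ)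
    (π : (Fin Q → Fin U → α) → α') (π' : (Fin Q' → Fin U' → α') → α'')
    (η : ℤ → ℤ → α) :
    blockApplyZ (Q * Q') (U * U') (fun P => π' (blockPattern Q U Q' U' π P)) η
      = blockApplyZ Q' U' π' (blockApplyZ Q U π η) := by
  funext t i
  simp only [blockApplyZ]
  congr 1
  funext q' u'
  simp only [blockPattern]
  congr 1
  funext q u
  simp only [subBlock, combFin]
  congr 1 <;> push_cast <;> ring

private lemma rtg_time {α : Type*} {B : α} {φ : α → α → α → α} {η : ℤ → ℤ → α}
    {p c : ℤ × ℤ} (h : Relation.ReflTransGen (Adj B φ η) p c) : p.2 ≤ c.2 := by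
  induction h with
  | refl => exact le_refl _
  | tail _ hstep ih =>
      obtain ⟨δ, _, _, ht, _⟩ := hstep
      omega

private lemma dc_forward {α : Type*} {B : α} {φ : α → α → α → α} {η : ℤ → ℤ → α}
    {p c : ℤ × ℤ} (h : DirectlyConnected B φ η p c) (hlt : p.2 < c.2) :
    Relation.ReflTransGen (Adj B φ η) p c := by
  cases h with
  | inl h => exact h
  | inr h => exact absurd (rtg_time h) (by omega)

private lemma path_lift {α α' : Type*} {B : α} {B' : α'} {φ : α → α → α → α}
    {φ' : α' → α' → α' → α'} {Q U : ℕ} {a : Fin Q} {b : Fin U}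
    {π : (Fin Q → Fin U → α) → α'}
    (hSc : Connecting B B' φ φ' Q U a b π) {η : ℤ → ℤ → α} (hη : η ∈ TrajTilde B φ)
    {p c : ℤ × ℤ}
    (h : Relation.ReflTransGen (Adj B' φ' (blockApplyZ Q U π η)) p c) :
    Relation.ReflTransGen (Adj B φ η)
      (p.1 * (Q : ℤ) + (a.val : ℤ), p.2 * (U : ℤ) + (b.val : ℤ))
      (c.1 * (Q : ℤ) + (a.val : ℤ), c.2 * (U : ℤ) + (b.val : ℤ)) := by
  induction h with
  | refl => exact .refl
  | @tail m c _ hstep ih =>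
      obtain ⟨δ, hδ, h1, h2, _⟩ := hstep
      have hm : m = (c.1 + δ, c.2 - 1) := Prod.ext h1 h2
      have hadj : Adj B' φ' (blockApplyZ Q U π η) (c.1 + δ, c.2 - 1) (c.1, c.2) := by
        rw [← hm]
        exact ⟨δ, hδ, h1, h2, ‹_›⟩
      have hdc := hSc η hη c.1 c.2 δ hδ hadj
      have hU : (0 : ℤ) < (U : ℤ) := by exact_mod_cast b.pos
      have hlt : (c.2 - 1) * (U : ℤ) + (b.val : ℤ) < c.2 * (U : ℤ) + (b.val : ℤ) := by
        nlinarith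
      have hseg := dc_forward hdc hlt
      refine ih.trans ?_
      rw [hm]
      exact hseg

end Aux

open CASim in
/-- If `S` (a simulation of `Φ'` by `Φ`) is weakly rigid and connecting,
and `S'` (a simulation of `Φ''` by `Φ'`) is strongly rigid and strongly connecting,
then the composition `S' ∘ S` is rigid and connecting. -/
theorem simulation_comp_weak_strong_rigid_connecting {α α' α'' : Type*}
    (B : α) (B' : α') (B'' : α'')
    (φ : α → α → α → α) (φ' : α' → α' → α' → α') (φ'' : α'' → α'' → α'' → α'')
    (hB : φ B B B = B) (hB' : φ' B' B' B' = B') (hB'' : φ'' B'' B'' B'' = B'')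
    (Q U : ℕ) (a : Fin Q) (b : Fin U)
    (C : Set (Fin Q → Fin U → α)) (π : (Fin Q → Fin U → α) → α')
    (Q' U' : ℕ) (a' : Fin Q') (b' : Fin U')
    (C' : Set (Fin Q' → Fin U' → α')) (π' : (Fin Q' → Fin U' → α') → α'')
    (hS : IsSimulation B B' φ φ' Q U a b C π)
    (hS' : IsSimulation B' B'' φ' φ'' Q' U' a' b' C' π')
    (hSwr : WeaklyRigid B B' φ φ' Q U π)
    (hSc : Connecting B B' φ φ' Q U a b π)
    (hS'sr : StronglyRigid B' B'' φ' φ'' Q' U' π')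
    (hS'sc : StronglyConnecting B' B'' φ' φ'' Q' U' a' b' π') :
    Rigid B B'' φ φ'' (Q * Q') (U * U')
        (fun P => π' (blockPattern Q U Q' U' π P)) ∧
    Connecting B B'' φ φ'' (Q * Q') (U * U') (combFin a a') (combFin b b')
        (fun P => π' (blockPattern Q U Q' U' π P)) := by
  constructor
  · intro η hη
    rw [blockApplyZ_comp]
    exact hS'sr _ (hSwr η hη)
  · intro η hη i t δ hδ hadj
    rw [blockApplyZ_comp] at hadj
    have hθ : blockApplyZ Q U π η ∈ TrajHat B' φ' := hSwr η hη
    have hdc := hS'sc _ hθ i t δ hδ hadj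
    have hU' : (0 : ℤ) < (U' : ℤ) := by exact_mod_cast b'.pos
    have hlt : ((t - 1) * (U' : ℤ) + (b'.val : ℤ)) < (t * (U' : ℤ) + (b'.val : ℤ)) := by
      nlinarith
    have hpath := path_lift hSc hη (dc_forward hdc hlt)
    refine Or.inl ?_
    convert hpath using 2 <;> simp only [combFin] <;> push_cast <;> ring
end

section
/- Let Φ : α^ℤ → α^ℤ be a cellular automaton on a finite alphabet α with quiescent state B. The following are equivalent: (1) Φ is asymptotically nilpotent in density; (2) Ω_Φ ⊆ [B^∞], i.e., every configuration in the limit set is in the Besicovitch class of the constant-B configuration; (3) lim_{ℓ→∞} max_{w ∈ B_ℓ(Ω_Φ)} (1/ℓ)·|{i ∈ [0, ℓ−1] : w_i ≠ B}| = 0. -/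
/-!
(1) ⇒ (2): a point of the limit set is an `n`-th image for every `n`.

(2) ⇒ (3): if long words of the limit set `Ω` had density of non-`B` symbols above `δ`, the
rising sun lemma would locate inside them, after a shift, points of `Ω` whose prefixes of length
up to `δ ℓ / 2` all have density `≥ δ / 2`; by compactness a limit of such points lies in `Ω`,
has all prefixes that dense, and so has positive Besicovitch distance to `B^∞`.

(3) ⇒ (1): pick `ℓ` with every `ℓ`-word of `Ω` of density `< ε`. By compactness, the `ℓ`-words
of `Φ^N(α^ℤ)` are words of `Ω` for `N` large, and tiling `[-n, n]` by `ℓ`-windows bounds the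
density of non-`B` symbols of every `Φ^N x` by `ε`.
-/

open Filter

/-- The Besicovitch pseudometric on `α^ℤ`:
`d_B(x,y) = limsup_{n→∞} |{i ∈ [-n,n] : x_i ≠ y_i}| / (2n+1)`. -/
noncomputable def besicovitchDist {α : Type} [DecidableEq α] (x y : ℤ → α) : ℝ :=
  Filter.limsup (fun n : ℕ =>
      (((Finset.Icc (-(n : ℤ)) (n : ℤ)).filter fun i => x i ≠ y i).card : ℝ) /
        (2 * (n : ℝ) + 1))
    Filter.atTop

open Topology

theorem IsCompact.exists_mem_forall_of_forall_exists {X : Type*} [TopologicalSpace X]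
    {K : Set X} (hK : IsCompact K) {P : ℕ → Set X} (hP : ∀ m, IsClosed (P m))
    (h : ∀ n, ∃ y ∈ K, ∀ m ≤ n, y ∈ P m) :
    ∃ y ∈ K, ∀ m, y ∈ P m := by
  obtain ⟨y, hyK, hyP⟩ := hK.inter_iInter_nonempty P hP fun u => by
    obtain ⟨y, hyK, hyP⟩ := h (u.sup id)
    exact ⟨y, hyK, Set.mem_iInter₂.2 fun m hm => hyP m (Finset.le_sup (f := id) hm)⟩
  exact ⟨y, hyK, Set.mem_iInter.1 hyP⟩

namespace CellularAutomaton

section LimitSet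

variable {X : Type*} {f : X → X}

variable (f) in
def limitSet : Set X := ⋂ n : ℕ, f^[n] '' Set.univ

theorem mem_limitSet {x : X} : x ∈ limitSet f ↔ ∀ n : ℕ, x ∈ Set.range f^[n] := by
  simp [limitSet]

theorem range_iterate_subset {m n : ℕ} (h : m ≤ n) : Set.range f^[n] ⊆ Set.range f^[m] := by
  rintro _ ⟨z, rfl⟩
  obtain ⟨k, rfl⟩ := Nat.exists_eq_add_of_le h
  exact ⟨f^[k] z, by rw [Function.iterate_add_apply]⟩

theorem _root_.Function.Commute.mapsTo_limitSet {g : X → X} (h : Function.Commute f g) :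
    Set.MapsTo g (limitSet f) (limitSet f) := by
  intro x hx
  refine mem_limitSet.2 fun n => ?_
  obtain ⟨z, rfl⟩ := mem_limitSet.1 hx n
  exact ⟨g z, (h.iterate_left n).eq z⟩

variable [TopologicalSpace X] [CompactSpace X] [T2Space X]

theorem isClosed_range_iterate (hf : Continuous f) (n : ℕ) : IsClosed (Set.range f^[n]) :=
  (isCompact_range (hf.iterate n)).isClosed

theorem isCompact_limitSet (hf : Continuous f) : IsCompact (limitSet f) := by
  refine (isClosed_iInter fun n => ?_).isCompact
  simpa using isClosed_range_iterate hf n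

theorem inter_limitSet_nonempty (hf : Continuous f) {U : Set X} (hU : IsClosed U)
    (h : ∀ n, (U ∩ Set.range f^[n]).Nonempty) : (U ∩ limitSet f).Nonempty := by
  obtain ⟨y, hyU, hy⟩ := hU.isCompact.exists_mem_forall_of_forall_exists
    (isClosed_range_iterate hf) fun n => by
      obtain ⟨y, hyU, hy⟩ := h n
      exact ⟨y, hyU, fun m hm => range_iterate_subset hm hy⟩
  exact ⟨y, hyU, mem_limitSet.2 hy⟩

theorem exists_iterate_forall_inter_limitSet_nonempty (hf : Continuous f) {ι : Type*} [Finite ι]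
    {U : ι → Set X} (hU : ∀ i, IsClosed (U i)) :
    ∃ N : ℕ, ∀ i, (U i ∩ Set.range f^[N]).Nonempty → (U i ∩ limitSet f).Nonempty := by
  suffices ∀ᶠ N in atTop, ∀ i, (U i ∩ Set.range f^[N]).Nonempty → (U i ∩ limitSet f).Nonempty from
    this.exists
  refine eventually_all.2 fun i => ?_
  by_cases hi : ∀ n, (U i ∩ Set.range f^[n]).Nonempty
  · exact Eventually.of_forall fun _ _ => inter_limitSet_nonempty hf (hU i) hi
  · obtain ⟨n, hn⟩ := not_forall.1 hi
    filter_upwards [eventually_ge_atTop n] with N hN ⟨y, hyU, hy⟩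
    exact absurd ⟨y, hyU, range_iterate_subset hN hy⟩ hn

end LimitSet

section WindowCount

open Finset

variable (p : ℤ → Prop) [DecidablePred p]

def windowCount (a : ℤ) (L : ℕ) : ℕ := ((range L).filter fun j : ℕ => p (a + j)).card

theorem windowCount_eq_sum (a : ℤ) (L : ℕ) :
    windowCount p a L = ∑ j ∈ range L, if p (a + j) then 1 else 0 :=
  card_filter _ _

@[simp]
theorem windowCount_zero (a : ℤ) : windowCount p a 0 = 0 := rfl

theorem windowCount_add (a : ℤ) (L M : ℕ) :
    windowCount p a (L + M) = windowCount p a L + windowCount p (a + L) M := by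
  simp only [windowCount_eq_sum, sum_range_add, Nat.cast_add, add_assoc]

theorem windowCount_le (a : ℤ) (L : ℕ) : windowCount p a L ≤ L :=
  (card_filter_le _ _).trans (card_range L).le

theorem windowCount_mono (a : ℤ) {L M : ℕ} (h : L ≤ M) :
    windowCount p a L ≤ windowCount p a M := by
  obtain ⟨k, rfl⟩ := Nat.exists_eq_add_of_le h
  exact (windowCount_add p a L k).symm ▸ Nat.le_add_right _ _

theorem windowCount_comp_add_right (c a : ℤ) (L : ℕ) :
    windowCount (fun k => p (k + c)) a L = windowCount p (a + c) L := by
  simp only [windowCount, add_right_comm]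

theorem windowCount_congr {q : ℤ → Prop} [DecidablePred q] {a b : ℤ} {L : ℕ}
    (h : ∀ j < L, p (a + j) ↔ q (b + j)) : windowCount p a L = windowCount q b L :=
  congrArg card (filter_congr fun j hj => h j (mem_range.1 hj))

theorem card_filter_Icc_neg_eq_windowCount (n : ℕ) :
    ((Icc (-(n : ℤ)) n).filter p).card = windowCount p (-n) (2 * n + 1) := by
  unfold windowCount
  refine card_nbij' (fun k => (k + n).toNat) (fun j => -n + j) ?_ ?_ ?_ ?_ <;>
    intro k <;> simp only [coe_filter, mem_range, Set.mem_ofPred_eq, mem_Icc] <;> intro hk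
  · refine ⟨by omega, ?_⟩
    rw [show -(n : ℤ) + (k + n).toNat = k by omega]
    exact hk.2
  · exact ⟨⟨by omega, by omega⟩, hk.2⟩
  · omega
  · omega

/-- Discrete rising sun lemma. -/
theorem exists_forall_windowCount_ge {δ : ℝ} (hδ : 0 ≤ δ) {a : ℤ} {L : ℕ}
    (h : δ * L < windowCount p a L) :
    ∃ c : ℤ, ∀ m : ℕ, (m : ℝ) ≤ δ / 2 * L → δ / 2 * m ≤ windowCount p c m := by
  -- start at a minimiser of `j ↦ windowCount p a j - δ j / 2` on `[0, L]`
  obtain ⟨c, hc, hmin⟩ := (range (L + 1)).exists_min_image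
    (fun j : ℕ => (windowCount p a j : ℝ) - δ / 2 * j) ⟨0, by simp⟩
  rw [mem_range, Nat.lt_succ_iff] at hc
  have hsplit (m : ℕ) :
      (windowCount p a (c + m) : ℝ) = windowCount p a c + windowCount p (a + c) m := by
    exact_mod_cast windowCount_add p a c m
  have hc0 := hmin 0 (by simp)
  simp only [windowCount_zero, CharP.cast_eq_zero, mul_zero, sub_zero] at hc0
  refine ⟨a + c, fun m hm => ?_⟩
  have hcm : c + m ≤ L := by
    have hrest := hsplit (L - c)
    rw [Nat.add_sub_cancel' hc] at hrest
    have hle : (windowCount p (a + c) (L - c) : ℝ) ≤ L - c := by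
      rw [← Nat.cast_sub hc]; exact_mod_cast windowCount_le p _ _
    have : (c : ℝ) ≤ L := by exact_mod_cast hc
    have : (m : ℝ) < L - c := by nlinarith
    exact_mod_cast (by push_cast; linarith : ((c + m : ℕ) : ℝ) ≤ L)
  have hcm' := hmin (c + m) (mem_range.2 (by omega))
  rw [hsplit] at hcm'
  push_cast at hcm'
  linarith

theorem windowCount_le_of_forall_windowCount_le {ℓ : ℕ} (hℓ : 0 < ℓ) {δ : ℝ}
    (h : ∀ a, (windowCount p a ℓ : ℝ) ≤ δ * ℓ) (a : ℤ) (L : ℕ) :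
    (windowCount p a L : ℝ) ≤ δ * (L + ℓ) := by
  have hℓ' : (0 : ℝ) < ℓ := by exact_mod_cast hℓ
  have hδ : 0 ≤ δ := nonneg_of_mul_nonneg_left ((Nat.cast_nonneg _).trans (h 0)) hℓ'
  have hblocks (k : ℕ) (a : ℤ) : (windowCount p a (k * ℓ) : ℝ) ≤ k * (δ * ℓ) := by
    induction k generalizing a with
    | zero => simp
    | succ k ih =>
      rw [Nat.succ_mul, windowCount_add, Nat.cast_add, Nat.cast_succ]
      linarith [ih a, h (a + (k * ℓ : ℕ))]
  set k := L / ℓ + 1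
  have hL : L ≤ k * ℓ := by rw [Nat.succ_mul]; exact (Nat.lt_div_mul_add hℓ).le
  have hk : (k : ℝ) * ℓ ≤ L + ℓ := by
    exact_mod_cast (by rw [Nat.succ_mul]; exact Nat.add_le_add_right (Nat.div_mul_le_self L ℓ) ℓ)
  calc (windowCount p a L : ℝ) ≤ windowCount p a (k * ℓ) := by
        exact_mod_cast windowCount_mono p a hL
    _ ≤ k * (δ * ℓ) := hblocks k a
    _ = δ * (k * ℓ) := by ring
    _ ≤ δ * (L + ℓ) := mul_le_mul_of_nonneg_left hk hδ

end WindowCount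

section Besicovitch

variable {α : Type} [DecidableEq α] (x y : ℤ → α)

theorem besicovitchDist_eq_limsup_windowCount :
    besicovitchDist x y = limsup (fun n : ℕ =>
      (windowCount (fun i => x i ≠ y i) (-n) (2 * n + 1) : ℝ) / (2 * n + 1)) atTop := by
  simp only [besicovitchDist, card_filter_Icc_neg_eq_windowCount]

theorem le_besicovitchDist {δ : ℝ}
    (h : ∀ n : ℕ, δ * (2 * n + 1) ≤ windowCount (fun i => x i ≠ y i) (-n) (2 * n + 1)) :
    δ ≤ besicovitchDist x y := by
  rw [besicovitchDist_eq_limsup_windowCount]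
  refine le_limsup_of_frequently_le
    (Frequently.of_forall fun n => (le_div_iff₀ (by positivity)).2 (h n))
    (isBoundedUnder_of ⟨1, fun n => div_le_one_of_le₀ ?_ (by positivity)⟩)
  exact_mod_cast windowCount_le _ _ _

theorem besicovitchDist_nonneg : 0 ≤ besicovitchDist x y :=
  le_besicovitchDist x y fun n => by simp

theorem besicovitchDist_le {δ C : ℝ}
    (h : ∀ n : ℕ, (windowCount (fun i => x i ≠ y i) (-n) (2 * n + 1) : ℝ) ≤ δ * (2 * n + 1) + C) :
    besicovitchDist x y ≤ δ := by
  have hlim : Tendsto (fun n : ℕ => δ + C / (2 * n + 1)) atTop (𝓝 δ) := by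
    have h2n : Tendsto (fun n : ℕ => 2 * (n : ℝ) + 1) atTop atTop :=
      tendsto_atTop_add_const_right _ 1 (tendsto_natCast_atTop_atTop.const_mul_atTop two_pos)
    simpa using tendsto_const_nhds.add (tendsto_const_nhds.div_atTop h2n)
  rw [besicovitchDist_eq_limsup_windowCount, ← hlim.limsup_eq]
  refine limsup_le_limsup (Eventually.of_forall fun n => ?_)
    (isCoboundedUnder_le_of_le atTop fun n => by positivity) hlim.isBoundedUnder_le
  rw [div_le_iff₀ (by positivity), add_mul, div_mul_cancel₀ _ (by positivity)]
  exact h n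

theorem le_besicovitchDist_of_le_windowCount {δ : ℝ} (hδ : 0 ≤ δ)
    (h : ∀ m : ℕ, δ * m ≤ windowCount (fun i => x i ≠ y i) 0 m) :
    δ / 2 ≤ besicovitchDist x y := by
  refine le_besicovitchDist x y fun n => ?_
  have hsplit := windowCount_add (fun i => x i ≠ y i) (-n) n (n + 1)
  rw [neg_add_cancel, show n + (n + 1) = 2 * n + 1 by ring] at hsplit
  rw [hsplit]
  have := h (n + 1)
  push_cast at this ⊢
  nlinarith

end Besicovitch

section Shift

variable {α : Type}

def shift (k : ℤ) (x : ℤ → α) : ℤ → α := fun i => x (i + k)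

@[simp]
theorem shift_shift (k l : ℤ) (x : ℤ → α) : shift k (shift l x) = shift (k + l) x := by
  funext i
  simp only [shift, add_assoc]

@[simp]
theorem shift_zero (x : ℤ → α) : shift 0 x = x := by
  funext i
  simp only [shift, add_zero]

theorem shift_natCast_eq_iterate (n : ℕ) : (shift n : (ℤ → α) → ℤ → α) = (shift 1)^[n] := by
  induction n with
  | zero => funext x; simp
  | succ n ih => rw [Function.iterate_succ', ← ih]; funext x; simp [add_comm]

theorem commute_shift {Φ : (ℤ → α) → ℤ → α}
    (hcomm : ∀ x : ℤ → α, Φ (fun i => x (i + 1)) = fun i => Φ x (i + 1)) (k : ℤ) :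
    Function.Commute Φ (shift k) := by
  have hnat (n : ℕ) : Function.Commute Φ (shift n) :=
    shift_natCast_eq_iterate (α := α) n ▸ Function.Commute.iterate_right hcomm n
  obtain ⟨n, rfl | rfl⟩ := Int.eq_nat_or_neg k
  · exact hnat n
  · exact (hnat n).inverses_right (fun x => by simp) (fun x => by simp)

end Shift

section WordDensity

variable {α : Type} [DecidableEq α]

/-- `max_{w ∈ B_ℓ(Ω)} |{i < ℓ : w_i ≠ B}| / ℓ`, which is `0` for `ℓ = 0`. -/
noncomputable def maxWordDensity (Ω : Set (ℤ → α)) (B : α) (ℓ : ℕ) : ℝ :=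
  sSup {r : ℝ | ∃ x ∈ Ω, ∃ i : ℤ, r = (windowCount (fun k => x k ≠ B) i ℓ : ℝ) / ℓ}

variable {Ω : Set (ℤ → α)} {B : α}

theorem windowCount_div_le_maxWordDensity {x : ℤ → α} (hx : x ∈ Ω) (i : ℤ) (ℓ : ℕ) :
    (windowCount (fun k => x k ≠ B) i ℓ : ℝ) / ℓ ≤ maxWordDensity Ω B ℓ := by
  refine le_csSup ⟨1, ?_⟩ ⟨x, hx, i, rfl⟩
  rintro _ ⟨x, -, i, rfl⟩
  exact div_le_one_of_le₀ (by exact_mod_cast windowCount_le _ _ _) (Nat.cast_nonneg ℓ)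

theorem maxWordDensity_nonneg (ℓ : ℕ) : 0 ≤ maxWordDensity Ω B ℓ :=
  Real.sSup_nonneg (by rintro _ ⟨x, -, i, rfl⟩; positivity)

theorem exists_lt_windowCount_of_lt_maxWordDensity {r : ℝ} (hr : 0 ≤ r) {ℓ : ℕ}
    (h : r < maxWordDensity Ω B ℓ) :
    ∃ x ∈ Ω, ∃ i : ℤ, r * ℓ < windowCount (fun k => x k ≠ B) i ℓ := by
  obtain hempty | hne := Set.eq_empty_or_nonempty
    {r : ℝ | ∃ x ∈ Ω, ∃ i : ℤ, r = (windowCount (fun k => x k ≠ B) i ℓ : ℝ) / ℓ}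
  · simp only [maxWordDensity, hempty, Real.sSup_empty] at h
    linarith
  obtain ⟨_, ⟨x, hx, i, rfl⟩, hlt⟩ := exists_lt_of_lt_csSup hne h
  rcases Nat.eq_zero_or_pos ℓ with rfl | hℓ
  · simp at hlt; linarith
  exact ⟨x, hx, i, (lt_div_iff₀ (by exact_mod_cast hℓ)).1 hlt⟩

theorem exists_mem_forall_windowCount_ge (hΩ : ∀ k, Set.MapsTo (shift k) Ω Ω) {δ : ℝ}
    (hδ : 0 ≤ δ) {ℓ : ℕ} (h : δ < maxWordDensity Ω B ℓ) :
    ∃ y ∈ Ω, ∀ m : ℕ, (m : ℝ) ≤ δ / 2 * ℓ → δ / 2 * m ≤ windowCount (fun k => y k ≠ B) 0 m := by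
  obtain ⟨x, hx, i, hdense⟩ := exists_lt_windowCount_of_lt_maxWordDensity hδ h
  obtain ⟨c, hc⟩ := exists_forall_windowCount_ge _ hδ hdense
  refine ⟨shift c x, hΩ c hx, fun m hm => ?_⟩
  have := windowCount_comp_add_right (fun k => x k ≠ B) c 0 m
  rw [zero_add] at this
  exact this ▸ hc m hm

end WordDensity

section AsymptoticNilpotence

variable {α : Type} {Φ : (ℤ → α) → ℤ → α}

def AsymptoticallyNilpotentInDensity [DecidableEq α] (Φ : (ℤ → α) → ℤ → α) (B : α) : Prop :=
  ∀ ε : ℝ, 0 < ε → ∃ n : ℕ, ∀ x : ℤ → α, besicovitchDist (Φ^[n] x) (fun _ => B) < ε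

theorem limitSet_subset_of_asymptoticallyNilpotentInDensity [DecidableEq α] {B : α}
    (h : AsymptoticallyNilpotentInDensity Φ B) :
    limitSet Φ ⊆ {y | besicovitchDist y (fun _ => B) = 0} := by
  intro y hy
  refine le_antisymm (le_of_forall_pos_lt_add fun ε hε => ?_) (besicovitchDist_nonneg _ _)
  obtain ⟨n, hn⟩ := h ε hε
  obtain ⟨z, rfl⟩ := mem_limitSet.1 hy n
  simpa using hn z

variable [TopologicalSpace α] [DiscreteTopology α]

theorem continuous_windowCount (q : α → Prop) [DecidablePred q] (a : ℤ) (L : ℕ) :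
    Continuous fun y : ℤ → α => windowCount (fun k => q (y k)) a L := by
  simp only [windowCount_eq_sum]
  exact continuous_finsetSum _ fun j _ =>
    (continuous_of_discreteTopology (f := fun b => if q b then 1 else 0)).comp
      (continuous_apply (a + j))

variable [Finite α]

theorem exists_iterate_forall_window_mem_limitSet (hΦ : Continuous Φ)
    (hcomm : ∀ x : ℤ → α, Φ (fun i => x (i + 1)) = fun i => Φ x (i + 1)) (ℓ : ℕ) :
    ∃ N : ℕ, ∀ (x : ℤ → α) (a : ℤ), ∃ y ∈ limitSet Φ, ∀ j < ℓ, Φ^[N] x (a + j) = y j := by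
  let U (w : Fin ℓ → α) : Set (ℤ → α) := {y | ∀ j : Fin ℓ, y j = w j}
  have hU (w : Fin ℓ → α) : IsClosed (U w) := by
    simp only [U, Set.ofPred_forall]
    exact isClosed_iInter fun j => isClosed_eq (continuous_apply _) continuous_const
  obtain ⟨N, hN⟩ := exists_iterate_forall_inter_limitSet_nonempty hΦ hU
  refine ⟨N, fun x a => ?_⟩
  obtain ⟨y, hyU, hy⟩ := hN (fun j => Φ^[N] x (a + j))
    ⟨shift a (Φ^[N] x), fun j => by simp [shift, add_comm],
      shift a x, ((commute_shift hcomm a).iterate_left N).eq x⟩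
  exact ⟨y, hy, fun j hj => (hyU ⟨j, hj⟩).symm⟩

variable [DecidableEq α] {B : α}

theorem tendsto_maxWordDensity_limitSet (hΦ : Continuous Φ)
    (hcomm : ∀ x : ℤ → α, Φ (fun i => x (i + 1)) = fun i => Φ x (i + 1))
    (h : limitSet Φ ⊆ {y | besicovitchDist y (fun _ => B) = 0}) :
    Tendsto (maxWordDensity (limitSet Φ) B) atTop (𝓝 0) := by
  by_contra hconv
  obtain ⟨δ, hδ, hfreq⟩ : ∃ δ > 0, ∀ L : ℕ, ∃ ℓ ≥ L, δ < maxWordDensity (limitSet Φ) B ℓ := by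
    rw [Metric.tendsto_atTop] at hconv
    push Not at hconv
    obtain ⟨ε, hε, hfreq⟩ := hconv
    refine ⟨ε / 2, by positivity, fun L => ?_⟩
    obtain ⟨ℓ, hℓ, hdist⟩ := hfreq L
    rw [Real.dist_0_eq_abs, abs_of_nonneg (maxWordDensity_nonneg ℓ)] at hdist
    exact ⟨ℓ, hℓ, by linarith⟩
  let P (m : ℕ) : Set (ℤ → α) := {y | δ / 2 * m ≤ windowCount (fun k => y k ≠ B) 0 m}
  have hprefix (K : ℕ) : ∃ y ∈ limitSet Φ, ∀ m ≤ K, y ∈ P m := by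
    obtain ⟨L, hL⟩ := exists_nat_ge (K / (δ / 2))
    obtain ⟨ℓ, hℓ, hdense⟩ := hfreq L
    obtain ⟨y, hy, hym⟩ := exists_mem_forall_windowCount_ge
      (fun k => (commute_shift hcomm k).mapsTo_limitSet) hδ.le hdense
    refine ⟨y, hy, fun m hm => hym m ?_⟩
    have : (m : ℝ) ≤ K := by exact_mod_cast hm
    have : (L : ℝ) ≤ ℓ := by exact_mod_cast hℓ
    rw [div_le_iff₀ (by positivity)] at hL
    nlinarith
  obtain ⟨Y, hY, hYdense⟩ := (isCompact_limitSet hΦ).exists_mem_forall_of_forall_exists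
    (fun m => (isClosed_discrete {k : ℕ | δ / 2 * m ≤ k}).preimage
      (continuous_windowCount (· ≠ B) 0 m)) hprefix
  have hlower := le_besicovitchDist_of_le_windowCount Y (fun _ => B) (by positivity) hYdense
  have hY0 : besicovitchDist Y (fun _ => B) = 0 := h hY
  linarith

theorem asymptoticallyNilpotentInDensity_of_tendsto (hΦ : Continuous Φ)
    (hcomm : ∀ x : ℤ → α, Φ (fun i => x (i + 1)) = fun i => Φ x (i + 1))
    (h : Tendsto (maxWordDensity (limitSet Φ) B) atTop (𝓝 0)) :
    AsymptoticallyNilpotentInDensity Φ B := by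
  intro ε hε
  obtain ⟨ℓ, hℓε, hℓ⟩ := ((h.eventually (gt_mem_nhds hε)).and (eventually_gt_atTop 0)).exists
  obtain ⟨N, hN⟩ := exists_iterate_forall_window_mem_limitSet hΦ hcomm ℓ
  refine ⟨N, fun x => ?_⟩
  have hwin (a : ℤ) : (windowCount (fun k => Φ^[N] x k ≠ B) a ℓ : ℝ)
      ≤ maxWordDensity (limitSet Φ) B ℓ * ℓ := by
    obtain ⟨y, hy, hxy⟩ := hN x a
    rw [windowCount_congr _ (q := fun k => y k ≠ B) (b := 0) fun j hj => by rw [hxy j hj, zero_add]]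
    exact (div_le_iff₀ (by positivity)).1 (windowCount_div_le_maxWordDensity hy 0 ℓ)
  refine (besicovitchDist_le (C := maxWordDensity (limitSet Φ) B ℓ * ℓ) _ _ fun n => ?_).trans_lt
    hℓε
  have := windowCount_le_of_forall_windowCount_le _ hℓ hwin (-n) (2 * n + 1)
  push_cast at this
  linarith

end AsymptoticNilpotence

end CellularAutomaton

open CellularAutomaton

theorem asymptoticallyNilpotentInDensity_tfae_general
    {α : Type} [Fintype α] [DecidableEq α] [TopologicalSpace α] [DiscreteTopology α]
    (B : α) (Φ : (ℤ → α) → (ℤ → α))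
    (hcont : Continuous Φ)
    (hcomm : ∀ x : ℤ → α, Φ (fun i => x (i + 1)) = fun i => Φ x (i + 1)) :
    List.TFAE
      [ ∀ ε : ℝ, 0 < ε → ∃ n : ℕ, ∀ x : ℤ → α,
          besicovitchDist (Φ^[n] x) (fun _ => B) < ε,
        (⋂ n : ℕ, Φ^[n] '' Set.univ) ⊆
          {y : ℤ → α | besicovitchDist y (fun _ => B) = 0},
        Filter.Tendsto (fun ℓ : ℕ =>
            sSup {r : ℝ | ∃ x ∈ ⋂ n : ℕ, Φ^[n] '' Set.univ, ∃ i : ℤ,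
              r = (((Finset.range ℓ).filter fun j : ℕ => x (i + (j : ℤ)) ≠ B).card : ℝ) / ℓ})
          Filter.atTop (nhds 0) ] := by
  tfae_have 1 → 2 := limitSet_subset_of_asymptoticallyNilpotentInDensity
  tfae_have 2 → 3 := tendsto_maxWordDensity_limitSet hcont hcomm
  tfae_have 3 → 1 := asymptoticallyNilpotentInDensity_of_tendsto hcont hcomm
  tfae_finish

/-- For a cellular automaton `Φ` with quiescent state `B`, the following
are equivalent: (1) `Φ` is asymptotically nilpotent in density; (2) the limit set
`Ω_Φ` is contained in the Besicovitch class of `B^∞`; (3) the maximal density of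
non-`B` symbols among length-`ℓ` words of the language of `Ω_Φ` tends to `0`. -/
theorem asymptoticallyNilpotentInDensity_tfae
    {α : Type} [Fintype α] [DecidableEq α] [TopologicalSpace α] [DiscreteTopology α]
    (B : α) (Φ : (ℤ → α) → (ℤ → α))
    (hcont : Continuous Φ)
    (hcomm : ∀ x : ℤ → α, Φ (fun i => x (i + 1)) = fun i => Φ x (i + 1))
    (hq : Φ (fun _ => B) = fun _ => B) :
    List.TFAE
      [ ∀ ε : ℝ, 0 < ε → ∃ n : ℕ, ∀ x : ℤ → α,
          besicovitchDist (Φ^[n] x) (fun _ => B) < ε,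
        (⋂ n : ℕ, Φ^[n] '' Set.univ) ⊆
          {y : ℤ → α | besicovitchDist y (fun _ => B) = 0},
        Filter.Tendsto (fun ℓ : ℕ =>
            sSup {r : ℝ | ∃ x ∈ ⋂ n : ℕ, Φ^[n] '' Set.univ, ∃ i : ℤ,
              r = (((Finset.range ℓ).filter fun j : ℕ => x (i + (j : ℤ)) ≠ B).card : ℝ) / ℓ})
          Filter.atTop (nhds 0) ] :=
  asymptoticallyNilpotentInDensity_tfae_general B Φ hcont hcomm
end
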